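/- For every bipartite graph G = (V_s, V_p, E), hub(G) ≤ r(G) ≤ 2^{hub(G)} − 1, where hub(G) is the HUB number of G and r(G) is the readability of G. -/

import Mathlib

namespace Readability

/-- `x` overlaps `y` by `i`: `1 ≤ i ≤ min |x| |y|` and the length-`i` suffix of `x`
equals the length-`i` prefix of `y`. -/
def OverlapsBy {α : Type*} (x y : List α) (i : ℕ) : Prop :=
  1 ≤ i ∧ i ≤ min x.length y.length ∧ x.drop (x.length - i) = y.take i

/-- `ov x y`: the minimum `i` such that `x` overlaps `y` by `i`, or `0` if none exists. -/
noncomputable def ov {α : Type*} (x y : List α) : ℕ := sInf {i | OverlapsBy x y i}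

/-- An overlap labeling of length `r` of the bipartite graph with parts `Vs`, `Vp` and
edge relation `E ⊆ Vs × Vp`. -/
def IsOverlapLabeling {α Vs Vp : Type*} (E : Vs → Vp → Prop) (r : ℕ)
    (ls : Vs → List α) (lp : Vp → List α) : Prop :=
  (∀ u, (ls u).length = r) ∧ (∀ v, (lp v).length = r) ∧
    ∀ u v, E u v ↔ ∃ i, OverlapsBy (ls u) (lp v) i

/-- Bipartite readability: the least `r` admitting an overlap labeling of length `r`
(over the alphabet `ℕ`). -/
noncomputable def bReadability {Vs Vp : Type*} (E : Vs → Vp → Prop) : ℕ :=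
  sInf {r | ∃ (ls : Vs → List ℕ) (lp : Vp → List ℕ), IsOverlapLabeling E r ls lp}

/-- An injective overlap labeling of length `r` of the digraph with arc relation `A`. -/
def IsInjOverlapLabeling {V : Type*} (A : V → V → Prop) (r : ℕ) (ℓ : V → List ℕ) : Prop :=
  (∀ v, (ℓ v).length = r) ∧ Function.Injective ℓ ∧
    ∀ u v, A u v ↔ 0 < ov (ℓ u) (ℓ v) ∧ ov (ℓ u) (ℓ v) < r

/-- Digraph readability: the least `r` admitting an injective overlap labeling of length `r`. -/
noncomputable def dReadability {V : Type*} (A : V → V → Prop) : ℕ :=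
  sInf {r | ∃ ℓ : V → List ℕ, IsInjOverlapLabeling A r ℓ}

/-- A decomposition of size `k`: a weight function on edges with values in `{1,…,k}`. -/
def IsDecomposition {Vs Vp : Type*} (E : Vs → Vp → Prop) (k : ℕ) (w : Vs → Vp → ℕ) : Prop :=
  ∀ u v, E u v → 1 ≤ w u v ∧ w u v ≤ k

/-- An induced `P₄` with consecutive edges `(s1,p1), (s2,p1), (s2,p2)`. -/
def InducedP4 {Vs Vp : Type*} (E : Vs → Vp → Prop) (s1 s2 : Vs) (p1 p2 : Vp) : Prop :=
  s1 ≠ s2 ∧ p1 ≠ p2 ∧ E s1 p1 ∧ E s2 p1 ∧ E s2 p2 ∧ ¬ E s1 p2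

/-- The `P₄`-rule: on each induced `P₄`, if the middle edge has maximum weight then its weight
is at least the sum of the weights of the two outer edges. -/
def SatisfiesP4Rule {Vs Vp : Type*} (E : Vs → Vp → Prop) (w : Vs → Vp → ℕ) : Prop :=
  ∀ s1 s2 p1 p2, InducedP4 E s1 s2 p1 p2 →
    w s2 p1 = max (w s1 p1) (max (w s2 p1) (w s2 p2)) →
    w s1 p1 + w s2 p2 ≤ w s2 p1

/-- The strict `P₄`-rule: as the `P₄`-rule, with strict inequality. -/
def SatisfiesStrictP4Rule {Vs Vp : Type*} (E : Vs → Vp → Prop) (w : Vs → Vp → ℕ) : Prop :=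
  ∀ s1 s2 p1 p2, InducedP4 E s1 s2 p1 p2 →
    w s2 p1 = max (w s1 p1) (max (w s2 p1) (w s2 p2)) →
    w s1 p1 + w s2 p2 < w s2 p1

/-- `C₄`-freeness of a bipartite graph. -/
def C4Free {Vs Vp : Type*} (E : Vs → Vp → Prop) : Prop :=
  ∀ (s1 s2 : Vs) (p1 p2 : Vp), s1 ≠ s2 → p1 ≠ p2 →
    ¬ (E s1 p1 ∧ E s1 p2 ∧ E s2 p1 ∧ E s2 p2)

/-- The subgraph `G_i` of a decomposition: edges of weight exactly `i`. -/
def SubAt {Vs Vp : Type*} (E : Vs → Vp → Prop) (w : Vs → Vp → ℕ) (i : ℕ) :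
    Vs → Vp → Prop :=
  fun u v => E u v ∧ w u v = i

/-- A bipartite edge relation is a disjoint union of bicliques iff it has no induced `P₄`,
i.e. whenever `(s1,p1), (s2,p1), (s2,p2)` are edges, so is `(s1,p2)`. -/
def BicliqueUnion {Vs Vp : Type*} (H : Vs → Vp → Prop) : Prop :=
  ∀ s1 s2 p1 p2, H s1 p1 → H s2 p1 → H s2 p2 → H s1 p2

/-- The HUB-rule for a decomposition `w`:
(i) every level graph `G_i` is a disjoint union of bicliques, and
(ii) non-isolated twins in `G_i` (for `i ≥ 2`) are twins in every `G_j` with `1 ≤ j ≤ i-1`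
(stated for both parts of the bipartition). -/
def SatisfiesHUBRule {Vs Vp : Type*} (E : Vs → Vp → Prop) (w : Vs → Vp → ℕ) : Prop :=
  (∀ i, 1 ≤ i → BicliqueUnion (SubAt E w i)) ∧
  (∀ i, 2 ≤ i → ∀ u v : Vs, u ≠ v → (∃ p, SubAt E w i u p) →
      (∀ p, SubAt E w i u p ↔ SubAt E w i v p) →
      ∀ j, 1 ≤ j → j ≤ i - 1 → ∀ p, SubAt E w j u p ↔ SubAt E w j v p) ∧
  (∀ i, 2 ≤ i → ∀ u v : Vp, u ≠ v → (∃ s, SubAt E w i s u) →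
      (∀ s, SubAt E w i s u ↔ SubAt E w i s v) →
      ∀ j, 1 ≤ j → j ≤ i - 1 → ∀ s, SubAt E w j s u ↔ SubAt E w j s v)

/-- The HUB number: minimum size of a decomposition satisfying the HUB-rule. -/
noncomputable def hubNumber {Vs Vp : Type*} (E : Vs → Vp → Prop) : ℕ :=
  sInf {k | ∃ w, IsDecomposition E k w ∧ SatisfiesHUBRule E w}

/-- The underlying undirected simple graph on `Vs ⊕ Vp` of a bipartite graph. -/
def underlyingGraph {Vs Vp : Type*} (E : Vs → Vp → Prop) : SimpleGraph (Vs ⊕ Vp) where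
  Adj x y := (∃ u v, x = Sum.inl u ∧ y = Sum.inr v ∧ E u v) ∨
    (∃ u v, x = Sum.inr v ∧ y = Sum.inl u ∧ E u v)
  symm := by
    constructor
    rintro x y (⟨u, v, rfl, rfl, h⟩ | ⟨u, v, rfl, rfl, h⟩)
    · exact Or.inr ⟨u, v, rfl, rfl, h⟩
    · exact Or.inl ⟨u, v, rfl, rfl, h⟩
  loopless := by
    constructor
    rintro x (⟨u, v, h1, h2, -⟩ | ⟨u, v, h1, h2, -⟩) <;> subst h1 <;> simp_all

/-- The radius of a graph: the least `r` such that some vertex has eccentricity at most `r`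
(for a finite connected graph this is `min_u max_v dist(u,v)`). -/
noncomputable def graphRadius {V : Type*} (G : SimpleGraph V) : ℕ :=
  sInf {r | ∃ u, ∀ v, G.dist u v ≤ r}

/-- Distinctness of two vertices `u, v` of the same part (here the `Vs`-part, with
neighborhoods taken in `Vp`): `max(|N(u)∖N(v)|, |N(v)∖N(u)|)`. -/
noncomputable def DTpair {Vs Vp : Type*} (E : Vs → Vp → Prop) (u v : Vs) : ℕ :=
  max {p : Vp | E u p ∧ ¬ E v p}.ncard {p : Vp | E v p ∧ ¬ E u p}.ncard

/-- Distinctness of a bipartite graph: the minimum of `DT(u,v)` over pairs of distinct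
vertices in the same part. -/
noncomputable def distinctness {Vs Vp : Type*} (E : Vs → Vp → Prop) : ℕ :=
  sInf ({d | ∃ u v : Vs, u ≠ v ∧ d = DTpair E u v} ∪
        {d | ∃ u v : Vp, u ≠ v ∧ d = DTpair (fun p s => E s p) u v})

/-- A bipartite graph fails to be a matching iff some vertex has degree at least 2. -/
def NotMatching {Vs Vp : Type*} (E : Vs → Vp → Prop) : Prop :=
  (∃ u : Vs, ∃ p1 p2 : Vp, p1 ≠ p2 ∧ E u p1 ∧ E u p2) ∨
  (∃ p : Vp, ∃ u1 u2 : Vs, u1 ≠ u2 ∧ E u1 p ∧ E u2 p)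

/-!
For `hub ≤ r`: weight each edge of an overlap labeling of length `r` by the length of the
shortest overlap of its labels. The length-`i` suffix of a label determines all its overlaps
of length at most `i`, and two labels overlapping one label by `i` share that suffix (dually
for prefixes); this gives both the biclique and the twin conditions.

For `r ≤ 2 ^ hub - 1`: from a HUB decomposition build labels of length `2 ^ i - 1` level by
level. The level-`(i+1)` label of `u ∈ Vs` is the level-`i` label of any level-`(i+1)`
neighbour, then a middle letter naming the biclique of `u` at level `i + 1`, then the level-`i`
label of `u`; dually for `Vp`, and a filler word replaces the missing neighbour of an isolated
vertex. By the twin condition the choice of neighbour does not matter, so an edge of weight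
`i` yields an overlap of length `2 ^ i - 1`. Each letter is tagged with the 2-adic valuation of
its position counted from the overlapping end; the tags along an overlap of length `j` then
read `ν₂(1), …, ν₂(j)` both forwards and backwards, which forces `j = 2 ^ i - 1`, and the
middle letters of such an overlap detect an edge of weight `i`.
-/

lemma _root_.List.rtake_append_of_le_length {α : Type*} {l₁ l₂ : List α} {n : ℕ}
    (h : n ≤ l₂.length) : (l₁ ++ l₂).rtake n = l₂.rtake n := by
  simp only [List.rtake, List.length_append, List.drop_append]
  rw [List.drop_of_length_le (by omega), List.nil_append, Nat.add_sub_assoc h,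
    Nat.add_sub_cancel_left]

lemma _root_.List.rtake_rtake {α : Type*} {l : List α} {m n : ℕ} (h : m ≤ n) :
    (l.rtake n).rtake m = l.rtake m := by
  simp only [List.rtake, List.length_drop, List.drop_drop]
  congr 1
  omega

lemma satisfiesHUBRule_of_injective {Vs Vp : Type*} {E : Vs → Vp → Prop} {w : Vs → Vp → ℕ}
    (hw : Function.Injective (Function.uncurry w)) : SatisfiesHUBRule E w := by
  have hinj {u u' p p'} (h : w u p = w u' p') : u = u' ∧ p = p' :=
    Prod.ext_iff.mp (@hw (u, p) (u', p') h)
  refine ⟨fun i _ s1 s2 p1 p2 h11 h21 h22 => ?_, fun i _ u v huv ⟨p, hp⟩ htwin => ?_,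
    fun i _ p q hpq ⟨s, hs⟩ htwin => ?_⟩
  · obtain rfl : p1 = p2 := (hinj (h21.2.trans h22.2.symm)).2
    exact h11
  · exact absurd (hinj (hp.2.trans ((htwin p).mp hp).2.symm)).1 huv
  · exact absurd (hinj (hs.2.trans ((htwin s).mp hs).2.symm)).2 hpq

lemma exists_decomposition_satisfiesHUBRule {Vs Vp : Type*} [Fintype Vs] [Fintype Vp]
    (E : Vs → Vp → Prop) : ∃ k w, IsDecomposition E k w ∧ SatisfiesHUBRule E w := by
  let f := Fintype.equivFin (Vs × Vp)
  refine ⟨Fintype.card (Vs × Vp), fun u p => f (u, p) + 1,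
    fun u p _ => ⟨Nat.le_add_left 1 _, (f (u, p)).isLt⟩,
    satisfiesHUBRule_of_injective fun a b h => ?_⟩
  obtain ⟨a₁, a₂⟩ := a
  obtain ⟨b₁, b₂⟩ := b
  exact f.injective (Fin.ext (Nat.add_right_cancel h))

section OverlapWeights

variable {α : Type*} {x x' y y' : List α} {i j : ℕ}

lemma ov_eq_iff (hj : 1 ≤ j) :
    ov x y = j ↔ OverlapsBy x y j ∧ ∀ m < j, ¬ OverlapsBy x y m := by
  constructor
  · rintro rfl
    have hne : {i | OverlapsBy x y i}.Nonempty :=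
      Nat.nonempty_of_pos_sInf (by unfold ov at hj; omega)
    exact ⟨Nat.sInf_mem hne, fun m hm => Nat.notMem_of_lt_sInf hm⟩
  · rintro ⟨hj, hlt⟩
    exact le_antisymm (Nat.sInf_le hj)
      (le_csInf ⟨j, hj⟩ fun m hm => not_lt.mp fun h => hlt m h hm)

lemma ov_eq_iff_of_overlapsBy_iff (h : ∀ m ≤ i, OverlapsBy x y m ↔ OverlapsBy x' y' m)
    (hj : 1 ≤ j) (hji : j ≤ i) : ov x y = j ↔ ov x' y' = j := by
  rw [ov_eq_iff hj, ov_eq_iff hj, h j hji]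
  exact and_congr_right' <| forall₂_congr fun m hm => not_congr (h m (by omega))

lemma rtake_eq_take_of_ov_eq (hj : 1 ≤ j) (h : ov x y = j) : x.rtake j = y.take j :=
  ((ov_eq_iff hj).mp h).1.2.2

lemma ov_eq_iff_of_rtake_eq (hlen : x.length = x'.length) (h : x.rtake i = x'.rtake i)
    (hj : 1 ≤ j) (hji : j ≤ i) : ov x y = j ↔ ov x' y = j := by
  refine ov_eq_iff_of_overlapsBy_iff (fun m hm => ?_) hj hji
  have hm : x.rtake m = x'.rtake m := by rw [← List.rtake_rtake hm, h, List.rtake_rtake hm]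
  change _ ∧ _ ∧ x.rtake m = _ ↔ _ ∧ _ ∧ x'.rtake m = _
  rw [hlen, hm]

lemma ov_eq_iff_of_take_eq (hlen : y.length = y'.length) (h : y.take i = y'.take i)
    (hj : 1 ≤ j) (hji : j ≤ i) : ov x y = j ↔ ov x y' = j := by
  refine ov_eq_iff_of_overlapsBy_iff (fun m hm => ?_) hj hji
  have hm : y.take m = y'.take m := by
    simpa [List.take_take, min_eq_left hm] using congrArg (List.take m) h
  unfold OverlapsBy
  rw [hlen, hm]

end OverlapWeights

namespace IsOverlapLabeling

variable {α Vs Vp : Type*} {E : Vs → Vp → Prop} {r : ℕ} {ls : Vs → List α} {lp : Vp → List α}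

lemma subAt_ov_iff (hl : IsOverlapLabeling E r ls lp) {j : ℕ} (hj : 1 ≤ j) {u : Vs} {p : Vp} :
    SubAt E (fun u p => ov (ls u) (lp p)) j u p ↔ ov (ls u) (lp p) = j :=
  ⟨And.right, fun h => ⟨(hl.2.2 u p).mpr ⟨j, ((ov_eq_iff hj).mp h).1⟩, h⟩⟩

lemma isDecomposition_ov (hl : IsOverlapLabeling E r ls lp) :
    IsDecomposition E r fun u p => ov (ls u) (lp p) := by
  intro u p hE
  obtain ⟨j, hj⟩ := (hl.2.2 u p).mp hE
  obtain ⟨h1, hle, -⟩ : OverlapsBy (ls u) (lp p) (ov (ls u) (lp p)) :=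
    Nat.sInf_mem (s := {i | OverlapsBy (ls u) (lp p) i}) ⟨j, hj⟩
  rw [hl.1 u, hl.2.1 p, min_self] at hle
  exact ⟨h1, hle⟩

lemma satisfiesHUBRule_ov (hl : IsOverlapLabeling E r ls lp) :
    SatisfiesHUBRule E fun u p => ov (ls u) (lp p) := by
  have hls u v : (ls u).length = (ls v).length := (hl.1 u).trans (hl.1 v).symm
  have hlp p q : (lp p).length = (lp q).length := (hl.2.1 p).trans (hl.2.1 q).symm
  refine ⟨fun i hi s1 s2 p1 p2 h11 h21 h22 => ?_,
    fun i hi u v _ ⟨p0, hu⟩ htwin j hj hji p => ?_,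
    fun i hi p q _ ⟨s0, hp⟩ htwin j hj hji s => ?_⟩
  · rw [hl.subAt_ov_iff hi] at h11 h21 h22 ⊢
    have hs : (ls s1).rtake i = (ls s2).rtake i := by
      rw [rtake_eq_take_of_ov_eq hi h11, rtake_eq_take_of_ov_eq hi h21]
    exact (ov_eq_iff_of_rtake_eq (hls s1 s2) hs hi le_rfl).mpr h22
  · have hv := (htwin p0).mp hu
    rw [hl.subAt_ov_iff (by omega)] at hu hv
    rw [hl.subAt_ov_iff hj, hl.subAt_ov_iff hj]
    refine ov_eq_iff_of_rtake_eq (i := i) (hls u v) ?_ hj (by omega)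
    rw [rtake_eq_take_of_ov_eq (by omega) hu, rtake_eq_take_of_ov_eq (by omega) hv]
  · have hq := (htwin s0).mp hp
    rw [hl.subAt_ov_iff (by omega)] at hp hq
    rw [hl.subAt_ov_iff hj, hl.subAt_ov_iff hj]
    refine ov_eq_iff_of_take_eq (i := i) (hlp p q) ?_ hj (by omega)
    rw [← rtake_eq_take_of_ov_eq (by omega) hp, rtake_eq_take_of_ov_eq (by omega) hq]

end IsOverlapLabeling

lemma padicValNat_le_padicValNat_pow_sub {p i m : ℕ} [Fact p.Prime] (h0 : 0 < m)
    (hm : m < p ^ i) : padicValNat p m ≤ padicValNat p (p ^ i - m) := by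
  have hv : padicValNat p m < i := by
    have := Nat.le_of_dvd h0 (pow_padicValNat_dvd (p := p) (n := m))
    exact (Nat.pow_lt_pow_iff_right (Fact.out : p.Prime).one_lt).mp (this.trans_lt hm)
  rw [← padicValNat_dvd_iff_le (by omega)]
  exact Nat.dvd_sub (pow_dvd_pow p hv.le) pow_padicValNat_dvd

lemma padicValNat_pow_sub {p i m : ℕ} [Fact p.Prime] (h0 : 0 < m) (hm : m < p ^ i) :
    padicValNat p (p ^ i - m) = padicValNat p m := by
  refine le_antisymm ?_ (padicValNat_le_padicValNat_pow_sub h0 hm)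
  simpa [Nat.sub_sub_self hm.le] using
    padicValNat_le_padicValNat_pow_sub (p := p) (i := i) (m := p ^ i - m) (by omega) (by omega)

lemma padicValNat_two_pow_add {i m : ℕ} (h0 : 0 < m) (hm : m < 2 ^ i) :
    padicValNat 2 (2 ^ i + m) = padicValNat 2 m := by
  have h : 2 ^ i + m = 2 ^ (i + 1) - (2 ^ i - m) := by rw [pow_succ]; omega
  rw [h, padicValNat_pow_sub (by omega) (by rw [pow_succ]; omega), padicValNat_pow_sub h0 hm]

lemma exists_eq_two_pow_of_padicValNat_palindrome {j : ℕ} (hj : 1 ≤ j)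
    (h : ∀ s, 1 ≤ s → s ≤ j → padicValNat 2 s = padicValNat 2 (j + 1 - s)) :
    ∃ i, j + 1 = 2 ^ i := by
  refine ⟨Nat.log 2 j + 1, ?_⟩
  set m := Nat.log 2 j
  have hlo : 2 ^ m ≤ j := Nat.pow_log_le_self 2 (by omega)
  have hhi : j < 2 ^ (m + 1) := Nat.lt_pow_succ_log_self (by norm_num) j
  rw [pow_succ] at hhi ⊢
  have hval := h (2 ^ m) Nat.one_le_two_pow hlo
  rw [padicValNat.prime_pow] at hval
  have hdvd : 2 ^ m ∣ j + 1 - 2 ^ m := (padicValNat_dvd_iff_le (by omega)).mpr hval.le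
  have := Nat.le_of_dvd (by omega) hdvd
  omega

def IsRulerTagged (l : List ℕ) : Prop :=
  ∀ n c, l[n]? = some c → c.unpair.1 = padicValNat 2 (n + 1)

lemma IsRulerTagged.append_cons {x y : List ℕ} {c i : ℕ} (hx : IsRulerTagged x)
    (hxlen : x.length = 2 ^ i - 1) (hc : c.unpair.1 = i) (hy : IsRulerTagged y)
    (hylen : y.length < 2 ^ i) : IsRulerTagged (x ++ c :: y) := by
  intro n d hd
  rcases lt_trichotomy n x.length with hn | rfl | hn
  · rw [List.getElem?_append_left hn] at hd
    exact hx n d hd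
  · obtain rfl : c = d := by simpa using hd
    rw [hc, hxlen, Nat.sub_add_cancel Nat.one_le_two_pow, padicValNat.prime_pow]
  · obtain ⟨m, hm⟩ : ∃ m, n - x.length = m + 1 := ⟨n - x.length - 1, by omega⟩
    rw [List.getElem?_append_right hn.le, hm, List.getElem?_cons_succ] at hd
    have hmy : m < y.length := (List.getElem?_eq_some_iff.mp hd).1
    rw [hy m d hd, show n + 1 = 2 ^ i + (m + 1) by omega,
      padicValNat_two_pow_add (by omega) (by omega)]

lemma IsRulerTagged.overlapsBy {x y : List ℕ} {k j : ℕ} (hx : IsRulerTagged x)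
    (hy : IsRulerTagged y) (hxlen : x.length = 2 ^ k - 1) (h : OverlapsBy x y j) :
    ∃ i, 1 ≤ i ∧ i ≤ k ∧ j = 2 ^ i - 1 := by
  obtain ⟨hj1, hjlen, hxy⟩ := h
  have hpal : ∀ s, 1 ≤ s → s ≤ j → padicValNat 2 s = padicValNat 2 (j + 1 - s) := by
    intro s hs hsj
    obtain ⟨c, hc⟩ : ∃ c, y[j - s]? = some c := ⟨_, List.getElem?_eq_getElem (by omega)⟩
    have hcx : x[x.length - s]? = some c := by
      have := congrArg (·[j - s]?) hxy
      simp only [List.getElem?_drop, List.getElem?_take, if_pos (show j - s < j by omega)] at this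
      rwa [show x.length - j + (j - s) = x.length - s by omega, hc] at this
    have hxtag := hx _ c hcx
    rw [hxlen, show 2 ^ k - 1 - s + 1 = 2 ^ k - s by omega,
      padicValNat_pow_sub (by omega) (by omega)] at hxtag
    rw [← hxtag, hy _ c hc, show j - s + 1 = j + 1 - s by omega]
  obtain ⟨i, hi⟩ := exists_eq_two_pow_of_padicValNat_palindrome hj1 hpal
  have hi0 : i ≠ 0 := by rintro rfl; simp at hi; omega
  have hik : 2 ^ i ≤ 2 ^ k := by omega
  exact ⟨i, by omega, (Nat.pow_le_pow_iff_right (by norm_num)).mp hik, by omega⟩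

def ruler (i : ℕ) : List ℕ :=
  (List.range (2 ^ i - 1)).map fun n => Nat.pair (padicValNat 2 (n + 1)) 0

lemma length_ruler (i : ℕ) : (ruler i).length = 2 ^ i - 1 := by simp [ruler]

lemma isRulerTagged_ruler (i : ℕ) : IsRulerTagged (ruler i) := by
  intro n c hc
  obtain ⟨hn, rfl⟩ := List.getElem?_eq_some_iff.mp hc
  simp [ruler]

section Labels

open Classical

variable {Vs Vp : Type*} (G : ℕ → Vs → Vp → Prop) (e : Option (Set Vp) → ℕ)

def nbrS (i : ℕ) (u : Vs) : Set Vp := {p | G i u p}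

def nbrP (i : ℕ) (p : Vp) : Set Vs := {s | G i s p}

noncomputable def midS (i : ℕ) (u : Vs) : ℕ := Nat.pair i (e (some (nbrS G (i + 1) u)))

/-- The payload `none` keeps a vertex `p` isolated at level `i + 1` from matching the middle
letter of a vertex `u` isolated at that level. -/
noncomputable def midP (i : ℕ) (p : Vp) : ℕ :=
  Nat.pair i (e (if h : (nbrP G (i + 1) p).Nonempty then some (nbrS G (i + 1) h.some) else none))

mutual

noncomputable def labelS : ℕ → Vs → List ℕ
  | 0, _ => []
  | i + 1, u =>
    (if h : (nbrS G (i + 1) u).Nonempty then labelP i h.some else ruler i) ++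
      midS G e i u :: labelS i u

noncomputable def labelP : ℕ → Vp → List ℕ
  | 0, _ => []
  | i + 1, p =>
    labelP i p ++ midP G e i p ::
      (if h : (nbrP G (i + 1) p).Nonempty then labelS i h.some else ruler i)

end

lemma length_labelS_labelP (i : ℕ) :
    (∀ u, (labelS G e i u).length = 2 ^ i - 1) ∧ ∀ p, (labelP G e i p).length = 2 ^ i - 1 := by
  induction i with
  | zero => simp [labelS, labelP]
  | succ i ih =>
    have := pow_succ 2 i
    have := @Nat.one_le_two_pow i
    refine ⟨fun u => ?_, fun p => ?_⟩
    · rw [labelS]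
      split <;> simp only [List.length_append, List.length_cons, ih.1, ih.2, length_ruler] <;> omega
    · rw [labelP]
      split <;> simp only [List.length_append, List.length_cons, ih.1, ih.2, length_ruler] <;> omega

lemma length_labelS (i : ℕ) (u : Vs) : (labelS G e i u).length = 2 ^ i - 1 :=
  (length_labelS_labelP G e i).1 u

lemma length_labelP (i : ℕ) (p : Vp) : (labelP G e i p).length = 2 ^ i - 1 :=
  (length_labelS_labelP G e i).2 p

lemma isRulerTagged_labelS_labelP (i : ℕ) :
    (∀ u, IsRulerTagged (labelS G e i u)) ∧ ∀ p, IsRulerTagged (labelP G e i p) := by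
  induction i with
  | zero => simp [labelS, labelP, IsRulerTagged]
  | succ i ih =>
    have := @Nat.one_le_two_pow i
    refine ⟨fun u => ?_, fun p => ?_⟩
    · rw [labelS]
      refine .append_cons (i := i) ?_ ?_ (by simp [midS]) (ih.1 u) (by rw [length_labelS]; omega)
      · split
        exacts [ih.2 _, isRulerTagged_ruler i]
      · split
        exacts [length_labelP G e i _, length_ruler i]
    · rw [labelP]
      refine .append_cons (ih.2 p) (length_labelP G e i p) (by simp [midP]) ?_ ?_
      · split
        exacts [ih.1 _, isRulerTagged_ruler i]
      · split <;> simp only [length_labelS, length_ruler] <;> omega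

lemma rtake_labelS {i k : ℕ} (hik : i ≤ k) (u : Vs) :
    (labelS G e k u).rtake (2 ^ i - 1) = labelS G e i u := by
  induction k, hik using Nat.le_induction with
  | base => rw [List.rtake, length_labelS, Nat.sub_self, List.drop_zero]
  | succ k hik ih =>
    have := Nat.pow_le_pow_right (n := 2) (by norm_num) hik
    rw [labelS, List.append_cons, List.rtake_append_of_le_length]
    · exact ih
    · rw [length_labelS]; omega

lemma take_labelP {i k : ℕ} (hik : i ≤ k) (p : Vp) :
    (labelP G e k p).take (2 ^ i - 1) = labelP G e i p := by
  induction k, hik using Nat.le_induction with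
  | base => rw [← length_labelP G e i p, List.take_length]
  | succ k hik ih =>
    have := Nat.pow_le_pow_right (n := 2) (by norm_num) hik
    rw [labelP, List.take_append_of_le_length (by rw [length_labelP]; omega)]
    exact ih

lemma getElem?_labelS_mid (i : ℕ) (u : Vs) :
    (labelS G e (i + 1) u)[2 ^ i - 1]? = some (midS G e i u) := by
  rw [labelS, List.getElem?_append_right] <;> split <;> simp [length_labelP, length_ruler]

lemma getElem?_labelP_mid (i : ℕ) (p : Vp) :
    (labelP G e (i + 1) p)[2 ^ i - 1]? = some (midP G e i p) := by
  rw [labelP, List.getElem?_append_right] <;> simp [length_labelP]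

lemma labelS_congr (i : ℕ) {u u' : Vs} (h : ∀ j, 1 ≤ j → j ≤ i → nbrS G j u = nbrS G j u') :
    labelS G e i u = labelS G e i u' := by
  induction i with
  | zero => simp [labelS]
  | succ i ih =>
    have hi : nbrS G (i + 1) u = nbrS G (i + 1) u' := h (i + 1) (by omega) le_rfl
    rw [labelS, labelS, ih fun j hj hji => h j hj (by omega), midS, midS, hi]

lemma labelP_congr (i : ℕ) {p p' : Vp} (h : ∀ j, 1 ≤ j → j ≤ i → nbrP G j p = nbrP G j p') :
    labelP G e i p = labelP G e i p' := by
  induction i with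
  | zero => simp [labelP]
  | succ i ih =>
    have hi : nbrP G (i + 1) p = nbrP G (i + 1) p' := h (i + 1) (by omega) le_rfl
    rw [labelP, labelP, ih fun j hj hji => h j hj (by omega), midP, midP]
    simp only [hi]

variable {G e} {i : ℕ}

lemma nbrS_eq_of_biclique (hG : BicliqueUnion (G i)) {u u' : Vs} {p : Vp} (h : G i u p)
    (h' : G i u' p) : nbrS G i u = nbrS G i u' :=
  Set.ext fun _ => ⟨hG u' u p _ h' h, hG u u' p _ h h'⟩

lemma nbrP_eq_of_biclique (hG : BicliqueUnion (G i)) {u : Vs} {p p' : Vp} (h : G i u p)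
    (h' : G i u p') : nbrP G i p = nbrP G i p' :=
  Set.ext fun s => ⟨fun hs => hG s u p p' hs h h', fun hs => hG s u p' p hs h' h⟩

lemma midS_eq_midP_iff (he : Function.Injective e) (hG : BicliqueUnion (G (i + 1))) (u : Vs)
    (p : Vp) : midS G e i u = midP G e i p ↔ G (i + 1) u p := by
  rw [midS, midP, Nat.pair_eq_pair, he.eq_iff]
  split_ifs with hp
  · have hmem : G (i + 1) hp.some p := hp.some_mem
    simp only [true_and, Option.some.injEq]
    exact ⟨fun h => (h ▸ hmem : p ∈ nbrS G (i + 1) u), fun h => nbrS_eq_of_biclique hG h hmem⟩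
  · simpa using fun h : G (i + 1) u p => hp ⟨u, h⟩

end Labels

section HUBLabels

variable {Vs Vp : Type*} {E : Vs → Vp → Prop} {w : Vs → Vp → ℕ} {e : Option (Set Vp) → ℕ}
  {i : ℕ}

lemma labelP_eq_of_adj (hw : SatisfiesHUBRule E w) {u : Vs} {p p' : Vp}
    (h : SubAt E w (i + 1) u p) (h' : SubAt E w (i + 1) u p') :
    labelP (SubAt E w) e i p = labelP (SubAt E w) e i p' := by
  by_cases hpp : p = p'
  · rw [hpp]
  have htwin := nbrP_eq_of_biclique (hw.1 (i + 1) (by omega)) h h'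
  refine labelP_congr _ e i fun j hj hji => Set.ext fun s => ?_
  exact hw.2.2 (i + 1) (by omega) p p' hpp ⟨u, h⟩ (Set.ext_iff.mp htwin) j hj (by omega) s

lemma labelS_eq_of_adj (hw : SatisfiesHUBRule E w) {u u' : Vs} {p : Vp}
    (h : SubAt E w (i + 1) u p) (h' : SubAt E w (i + 1) u' p) :
    labelS (SubAt E w) e i u = labelS (SubAt E w) e i u' := by
  by_cases huu : u = u'
  · rw [huu]
  have htwin := nbrS_eq_of_biclique (hw.1 (i + 1) (by omega)) h h'
  refine labelS_congr _ e i fun j hj hji => Set.ext fun q => ?_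
  exact hw.2.1 (i + 1) (by omega) u u' huu ⟨p, h⟩ (Set.ext_iff.mp htwin) j hj (by omega) q

lemma labelS_eq_labelP_iff (hw : SatisfiesHUBRule E w) (he : Function.Injective e) (hi : 1 ≤ i)
    (u : Vs) (p : Vp) :
    labelS (SubAt E w) e i u = labelP (SubAt E w) e i p ↔ SubAt E w i u p := by
  obtain ⟨i, rfl⟩ := Nat.exists_eq_add_of_le' hi
  rw [← midS_eq_midP_iff he (hw.1 (i + 1) hi)]
  constructor
  · intro h
    have hmid := congrArg (·[2 ^ i - 1]?) h
    simp only [getElem?_labelS_mid, getElem?_labelP_mid] at hmid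
    exact Option.some.inj hmid
  · intro h
    have hup := (midS_eq_midP_iff he (hw.1 (i + 1) hi) u p).mp h
    have hu : (nbrS (SubAt E w) (i + 1) u).Nonempty := ⟨p, hup⟩
    have hp : (nbrP (SubAt E w) (i + 1) p).Nonempty := ⟨u, hup⟩
    rw [labelS, labelP, dif_pos hu, dif_pos hp, h, labelP_eq_of_adj hw hu.some_mem hup,
      labelS_eq_of_adj hw hp.some_mem hup]

lemma isOverlapLabeling_labelS_labelP {k : ℕ} (hdec : IsDecomposition E k w)
    (hw : SatisfiesHUBRule E w) (he : Function.Injective e) :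
    IsOverlapLabeling E (2 ^ k - 1) (labelS (SubAt E w) e k) (labelP (SubAt E w) e k) := by
  refine ⟨length_labelS _ e k, length_labelP _ e k, fun u p => ⟨fun hE => ?_, ?_⟩⟩
  · obtain ⟨h1, hk⟩ := hdec u p hE
    have := Nat.pow_le_pow_right (n := 2) (by norm_num) h1
    have := Nat.pow_le_pow_right (n := 2) (by norm_num) hk
    refine ⟨2 ^ w u p - 1, by omega, by simp [length_labelS, length_labelP]; omega, ?_⟩
    change List.rtake _ _ = _
    rw [rtake_labelS _ e hk, take_labelP _ e hk, labelS_eq_labelP_iff hw he h1]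
    exact ⟨hE, rfl⟩
  · rintro ⟨j, hj⟩
    obtain ⟨i, hi, hik, rfl⟩ := IsRulerTagged.overlapsBy
      ((isRulerTagged_labelS_labelP _ e k).1 u) ((isRulerTagged_labelS_labelP _ e k).2 p)
      (length_labelS _ e k u) hj
    have hov : (labelS (SubAt E w) e k u).rtake (2 ^ i - 1) = _ := hj.2.2
    rw [rtake_labelS _ e hik, take_labelP _ e hik, labelS_eq_labelP_iff hw he hi] at hov
    exact hov.1

end HUBLabels

/-- For every (finite) bipartite graph `G`, `hub(G) ≤ r(G) ≤ 2^{hub(G)} − 1`. -/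
theorem statement9 {Vs Vp : Type*} [Fintype Vs] [Fintype Vp] (E : Vs → Vp → Prop) :
    hubNumber E ≤ bReadability E ∧ bReadability E ≤ 2 ^ hubNumber E - 1 := by
  obtain ⟨w, hdec, hw⟩ : ∃ w, IsDecomposition E (hubNumber E) w ∧ SatisfiesHUBRule E w :=
    Nat.sInf_mem (exists_decomposition_satisfiesHUBRule E)
  obtain ⟨e, he⟩ := exists_injective_nat (Option (Set Vp))
  have hlab := isOverlapLabeling_labelS_labelP hdec hw he
  have hr : bReadability E ≤ 2 ^ hubNumber E - 1 := Nat.sInf_le ⟨_, _, hlab⟩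
  obtain ⟨ls, lp, hl⟩ := Nat.sInf_mem
    (s := {r | ∃ (ls : Vs → List ℕ) (lp : Vp → List ℕ), IsOverlapLabeling E r ls lp})
    ⟨_, _, _, hlab⟩
  exact ⟨Nat.sInf_le ⟨_, hl.isDecomposition_ov, hl.satisfiesHUBRule_ov⟩, hr⟩

end Readability
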